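/- For m ≥ 4, the F_2-linear span of the weight-6 codewords of BiD^⊥(m,2,2) is the abelian code A(m, {0,...,m}\{0,2}); equivalently, the dual of this span is BiD(m,2,2) ⊕ BiD(m,0,0) = A(m,{0,2}), the direct sum of the second-order BiD code and the length-3^m repetition code. -/
import Mathlib


open Finset

abbrev F4 := GaloisField 2 2

noncomputable def toF4 : ZMod 2 →+* F4 := ZMod.castHom dvd_rfl F4

def dotp {m : ℕ} (i j : Fin m → ZMod 3) : ZMod 3 := ∑ l, i l * j l

noncomputable def dft {m : ℕ} (α : F4) (f : (Fin m → ZMod 3) → ZMod 2)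
    (j : Fin m → ZMod 3) : F4 :=
  ∑ i : Fin m → ZMod 3, toF4 (f i) * α ^ (dotp i j).val

noncomputable def code (m : ℕ) (α : F4) (W : Set ℕ) :
    Set ((Fin m → ZMod 3) → ZMod 2) :=
  {f | ∀ j : Fin m → ZMod 3, hammingNorm j ∉ W → dft α f j = 0}

lemma dft_add {m : ℕ} (α : F4) (f g : (Fin m → ZMod 3) → ZMod 2) (j : Fin m → ZMod 3) :
    dft α (f + g) j = dft α f j + dft α g j := by
  simp [dft, map_add, add_mul, Finset.sum_add_distrib]

noncomputable def codeSubmodule (m : ℕ) (α : F4) (W : Set ℕ) :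
    Submodule (ZMod 2) ((Fin m → ZMod 3) → ZMod 2) where
  carrier := code m α W
  zero_mem' := by
    intro j hj
    simp [code, dft]
  add_mem' := by
    intro f g hf hg j hj
    rw [dft_add, hf j hj, hg j hj, add_zero]
  smul_mem' := by
    intro c f hf
    have hc : c = 0 ∨ c = 1 := by revert c; decide
    rcases hc with h | h
    · subst h
      intro j hj
      simp [code, dft, show (0 : ZMod 2) • f = 0 from zero_smul _ f]
    · subst h
      rw [one_smul]
      exact hf

section AuxF4

lemma F4_two : (2 : F4) = 0 := by
  have h := CharP.cast_eq_zero F4 2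
  exact_mod_cast h

lemma alpha_cube {α : F4} (hα : α ^ 2 = α + 1) : α ^ 3 = 1 := by
  linear_combination (α + 1) * hα + α * F4_two

lemma alpha_sum {α : F4} (hα : α ^ 2 = α + 1) : 1 + α + α ^ 2 = 0 := by
  linear_combination hα + (α + 1) * F4_two

lemma alpha_inv {α : F4} (hα : α ^ 2 = α + 1) : (1 + α) * (1 + α ^ 2) = 1 := by
  linear_combination (α + 2) * hα + (2 * α + 1) * F4_two

lemma pow_val_mod (α : F4) (hα : α ^ 2 = α + 1) (n : ℕ) : α ^ n = α ^ (n % 3) := by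
  conv_lhs => rw [← Nat.div_add_mod n 3]
  rw [pow_add, pow_mul, alpha_cube hα, one_pow, one_mul]

lemma B_add (α : F4) (hα : α ^ 2 = α + 1) (a b : ZMod 3) :
    α ^ ((a + b).val) = α ^ a.val * α ^ b.val := by
  rw [ZMod.val_add, ← pow_val_mod α hα, pow_add]

lemma zmod3_cases (t : ZMod 3) : t = 0 ∨ t = 1 ∨ t = 2 := by revert t; decide

lemma charSum (α : F4) (hα : α ^ 2 = α + 1) (t : ZMod 3) :
    ∑ c : ZMod 3, α ^ ((t * c).val) = if t = 0 then 1 else 0 := by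
  have huniv : (Finset.univ : Finset (ZMod 3)) = {0, 1, 2} := by decide
  rw [huniv, Finset.sum_insert (by decide), Finset.sum_insert (by decide),
    Finset.sum_singleton]
  rcases zmod3_cases t with h | h | h <;> subst h
  · rw [if_pos rfl, show ((0 : ZMod 3) * 0).val = 0 from rfl,
      show ((0 : ZMod 3) * 1).val = 0 from rfl, show ((0 : ZMod 3) * 2).val = 0 from rfl,
      pow_zero]
    linear_combination F4_two
  · rw [if_neg (by decide), show ((1 : ZMod 3) * 0).val = 0 from rfl,
      show ((1 : ZMod 3) * 1).val = 1 from rfl, show ((1 : ZMod 3) * 2).val = 2 from rfl,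
      pow_zero, pow_one]
    linear_combination hα + (α + 1) * F4_two
  · rw [if_neg (by decide), show ((2 : ZMod 3) * 0).val = 0 from rfl,
      show ((2 : ZMod 3) * 1).val = 2 from rfl, show ((2 : ZMod 3) * 2).val = 1 from rfl,
      pow_zero, pow_one]
    linear_combination hα + (α + 1) * F4_two

lemma one_add_pow (α : F4) (hα : α ^ 2 = α + 1) (x : ZMod 3) :
    1 + α ^ x.val + α ^ x.val * α ^ x.val = if x = 0 then 1 else 0 := by
  rcases zmod3_cases x with h | h | h <;> subst h
  · rw [if_pos rfl, show (0 : ZMod 3).val = 0 from rfl, pow_zero]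
    linear_combination F4_two
  · rw [if_neg (by decide), show (1 : ZMod 3).val = 1 from rfl, pow_one]
    linear_combination hα + (α + 1) * F4_two
  · rw [if_neg (by decide), show (2 : ZMod 3).val = 2 from rfl]
    linear_combination (α ^ 2 + α + 3) * hα + (2 * α + 2) * F4_two

end AuxF4
section AuxFourier

variable {m : ℕ}

lemma dotp_add_left (a b j : Fin m → ZMod 3) : dotp (a + b) j = dotp a j + dotp b j := by
  simp [dotp, add_mul, Finset.sum_add_distrib]

lemma dotp_zero_left (j : Fin m → ZMod 3) : dotp 0 j = 0 := by simp [dotp]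

lemma dotp_zero_right (i : Fin m → ZMod 3) : dotp i 0 = 0 := by simp [dotp]

lemma pow_val_sum (α : F4) (hα : α ^ 2 = α + 1) {ι : Type*} (s : Finset ι) (g : ι → ZMod 3) :
    α ^ (∑ l ∈ s, g l).val = ∏ l ∈ s, α ^ (g l).val := by
  induction s using Finset.cons_induction with
  | empty => simp
  | cons a s ha ih => rw [Finset.sum_cons, Finset.prod_cons, B_add α hα, ih]

lemma sum_pow_dotp (α : F4) (hα : α ^ 2 = α + 1) (t : Fin m → ZMod 3) :
    ∑ j : Fin m → ZMod 3, α ^ (dotp t j).val = if t = 0 then 1 else 0 := by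
  have h1 : ∀ j : Fin m → ZMod 3, α ^ (dotp t j).val = ∏ l, α ^ ((t l * j l)).val := by
    intro j
    exact pow_val_sum α hα Finset.univ (fun l => t l * j l)
  calc ∑ j : Fin m → ZMod 3, α ^ (dotp t j).val
      = ∑ j : Fin m → ZMod 3, ∏ l, α ^ ((t l * j l)).val :=
        Finset.sum_congr rfl (fun j _ => h1 j)
    _ = ∏ l, ∑ c : ZMod 3, α ^ ((t l * c)).val := by
        rw [Finset.prod_univ_sum]
        rw [Fintype.piFinset_univ]
    _ = ∏ l, (if t l = 0 then (1 : F4) else 0) :=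
        Finset.prod_congr rfl (fun l _ => charSum α hα (t l))
    _ = if t = 0 then 1 else 0 := by
        by_cases ht : t = 0
        · subst ht; simp
        · rw [if_neg ht]
          obtain ⟨l, hl⟩ := Function.ne_iff.mp ht
          exact Finset.prod_eq_zero (Finset.mem_univ l) (if_neg hl)

lemma dft_inversion (α : F4) (hα : α ^ 2 = α + 1) (f : (Fin m → ZMod 3) → ZMod 2)
    (i : Fin m → ZMod 3) :
    toF4 (f i) = ∑ j : Fin m → ZMod 3, dft α f j * α ^ (dotp (-i) j).val := by
  have key : ∀ x j : Fin m → ZMod 3,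
      toF4 (f x) * α ^ (dotp x j).val * α ^ (dotp (-i) j).val
        = toF4 (f x) * α ^ (dotp (x + -i) j).val := by
    intro x j
    rw [dotp_add_left, B_add α hα, mul_assoc]
  symm
  calc ∑ j : Fin m → ZMod 3, dft α f j * α ^ (dotp (-i) j).val
      = ∑ j : Fin m → ZMod 3, ∑ x : Fin m → ZMod 3,
          toF4 (f x) * α ^ (dotp (x + -i) j).val := by
        refine Finset.sum_congr rfl (fun j _ => ?_)
        rw [dft, Finset.sum_mul]
        exact Finset.sum_congr rfl (fun x _ => key x j)
    _ = ∑ x : Fin m → ZMod 3, ∑ j : Fin m → ZMod 3,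
          toF4 (f x) * α ^ (dotp (x + -i) j).val := Finset.sum_comm
    _ = ∑ x : Fin m → ZMod 3, toF4 (f x) * (if x + -i = 0 then (1:F4) else 0) := by
        refine Finset.sum_congr rfl (fun x _ => ?_)
        rw [← Finset.mul_sum, sum_pow_dotp α hα]
    _ = ∑ x : Fin m → ZMod 3, (if x = i then toF4 (f x) else 0) := by
        refine Finset.sum_congr rfl (fun x _ => ?_)
        by_cases hx : x = i
        · rw [if_pos hx, if_pos (by rw [hx]; exact add_neg_cancel i), mul_one]
        · have hne : ¬(x + -i = 0) := by
            intro hc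
            exact hx (by rwa [add_neg_eq_zero] at hc)
          rw [if_neg hx, if_neg hne, mul_zero]
    _ = toF4 (f i) := by
        rw [Finset.sum_ite_eq' Finset.univ i (fun x => toF4 (f x))]
        exact if_pos (Finset.mem_univ i)

lemma dft_translate_sum (α : F4) (hα : α ^ 2 = α + 1) (g : (Fin m → ZMod 3) → ZMod 2)
    (i j : Fin m → ZMod 3) :
    ∑ t : Fin m → ZMod 3, α ^ (dotp t j).val * toF4 (g (i + t))
      = α ^ (dotp (-i) j).val * dft α g j := by
  have h1 : ∀ s : Fin m → ZMod 3,
      α ^ (dotp (s + -i) j).val * toF4 (g s)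
        = α ^ (dotp (-i) j).val * (toF4 (g s) * α ^ (dotp s j).val) := by
    intro s
    rw [dotp_add_left, B_add α hα]
    ring
  calc ∑ t : Fin m → ZMod 3, α ^ (dotp t j).val * toF4 (g (i + t))
      = ∑ s : Fin m → ZMod 3, α ^ (dotp (s + -i) j).val * toF4 (g (i + (s + -i))) := by
        refine (Fintype.sum_equiv (Equiv.addRight (-i)) _ _ ?_).symm
        intro s
        simp only [Equiv.coe_addRight]
    _ = ∑ s : Fin m → ZMod 3, α ^ (dotp (s + -i) j).val * toF4 (g s) := by
        refine Finset.sum_congr rfl (fun s _ => ?_)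
        have harg : i + (s + -i) = s := by
          rw [add_comm s (-i), ← add_assoc, add_neg_cancel, zero_add]
        rw [harg]
    _ = α ^ (dotp (-i) j).val * dft α g j := by
        rw [dft, Finset.mul_sum]
        exact Finset.sum_congr rfl (fun s _ => h1 s)

lemma dft_translate (α : F4) (hα : α ^ 2 = α + 1) (g : (Fin m → ZMod 3) → ZMod 2)
    (t j : Fin m → ZMod 3) :
    dft α (fun i => g (i + t)) j = α ^ (dotp (-t) j).val * dft α g j := by
  rw [← dft_translate_sum α hα g t j, dft]
  refine Finset.sum_congr rfl (fun x _ => ?_)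
  rw [mul_comm, add_comm]

lemma hammingNorm_translate (g : (Fin m → ZMod 3) → ZMod 2) (t : Fin m → ZMod 3) :
    hammingNorm (fun i => g (i + t)) = hammingNorm g := by
  unfold hammingNorm
  apply Finset.card_bij' (fun i _ => i + t) (fun i _ => i + -t)
  · intro a ha
    simp only [Finset.mem_filter, Finset.mem_univ, true_and] at ha ⊢
    exact ha
  · intro a ha
    simp only [Finset.mem_filter, Finset.mem_univ, true_and] at ha ⊢
    have : a + -t + t = a := neg_add_cancel_right a t
    rwa [this]
  · intro a _; exact add_neg_cancel_right a t
  · intro a _; exact neg_add_cancel_right a t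

end AuxFourier

section AuxToF4

lemma toF4_injective : Function.Injective (toF4 : ZMod 2 →+* F4) :=
  RingHom.injective toF4

lemma toF4_sq (v : ZMod 2) : toF4 v * toF4 v = toF4 v := by
  have : v = 0 ∨ v = 1 := by revert v; decide
  rcases this with h | h <;> subst h <;> simp

lemma F4_pow4 (x : F4) : x ^ 4 = x := by
  letI : Fintype F4 := Fintype.ofFinite _
  have hcard : Fintype.card F4 = 4 := by
    have h := GaloisField.card (p := 2) (n := 2) (by norm_num)
    rwa [Nat.card_eq_fintype_card] at h
  calc x ^ 4 = x ^ (Fintype.card F4) := by rw [hcard]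
  _ = x := FiniteField.pow_card x

end AuxToF4
section AuxComb

variable {m : ℕ}

lemma zmod3_sq (x : ZMod 3) (hx : x ≠ 0) : x * x = 1 := by revert x; decide

lemma zmod3_mul_ne (x y : ZMod 3) (hx : x ≠ 0) (hy : y ≠ 0) : x * y ≠ 0 := by
  revert x y; decide

lemma exists_qd (j : Fin m → ZMod 3) (hj0 : j ≠ 0) (hj2 : hammingNorm j ≠ 2) :
    ∃ (q : Fin m) (d : Fin m → ZMod 3), j q ≠ 0 ∧ d q = 0 ∧
      (∀ r, r ≠ q → d r ≠ 0) ∧ dotp d j = 0 := by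
  obtain ⟨q, hq0⟩ := Function.ne_iff.mp hj0
  have hq : j q ≠ 0 := hq0
  set S : Finset (Fin m) := Finset.univ.filter (fun r => j r ≠ 0) with hS
  set T : Finset (Fin m) := S.erase q with hT
  set k : ℕ := T.card with hk
  have hqS : q ∈ S := by rw [hS]; simp [hq]
  have hcard : hammingNorm j = k + 1 := by
    have h1 : k = S.card - 1 := by rw [hk, hT]; exact Finset.card_erase_of_mem hqS
    have h2 : 0 < S.card := Finset.card_pos.mpr ⟨q, hqS⟩
    have h3 : hammingNorm j = S.card := rfl
    omega
  have hk1 : k ≠ 1 := by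
    intro h
    exact hj2 (by rw [hcard, h])
  set b' : ℕ := if k % 3 = 0 then 0 else 3 - k % 3 with hb'
  have hble : b' ≤ k ∧ 3 ∣ k + b' := by
    by_cases h0 : k % 3 = 0
    · rw [hb', if_pos h0]; omega
    · rw [hb', if_neg h0]; omega
  obtain ⟨T', hT'sub, hT'card⟩ := Finset.exists_subset_card_eq hble.1
  set d : Fin m → ZMod 3 := fun r => if r = q then 0 else if j r = 0 then 1 else
    (if r ∈ T' then 2 else 1) * j r with hd
  have hdq : d q = 0 := by rw [hd]; simp
  refine ⟨q, d, hq, hdq, ?_, ?_⟩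
  · intro r hr
    have : d r = if j r = 0 then 1 else (if r ∈ T' then 2 else 1) * j r := by
      rw [hd]; simp [hr]
    rw [this]
    by_cases hjr : j r = 0
    · rw [if_pos hjr]; exact one_ne_zero
    · rw [if_neg hjr]
      exact zmod3_mul_ne _ _ (by split <;> decide) hjr
  · have hterm : ∀ r, d r * j r
        = if r ∈ T then (if r ∈ T' then (2 : ZMod 3) else 1) else 0 := by
      intro r
      by_cases hrq : r = q
      · have hrT : r ∉ T := by rw [hT, hrq]; exact Finset.notMem_erase q S
        rw [if_neg hrT, hd]
        simp [hrq]
      · by_cases hjr : j r = 0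
        · have hrT : r ∉ T := by
            rw [hT, hS]
            simp [hjr]
          have : d r = 1 := by rw [hd]; simp [hrq, hjr]
          rw [if_neg hrT, this, one_mul, hjr]
        · have hrT : r ∈ T := by
            rw [hT, hS]
            simp [Finset.mem_erase, hrq, hjr]
          have : d r = (if r ∈ T' then 2 else 1) * j r := by rw [hd]; simp [hrq, hjr]
          rw [if_pos hrT, this, mul_assoc, zmod3_sq _ hjr, mul_one]
    have hsum : dotp d j = ∑ r, (if r ∈ T then (if r ∈ T' then (2 : ZMod 3) else 1) else 0) :=
      Finset.sum_congr rfl (fun r _ => hterm r)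
    rw [hsum, Finset.sum_ite_mem, Finset.univ_inter, ← Finset.sum_sdiff hT'sub,
      Finset.sum_congr rfl (fun r hr => if_neg (Finset.mem_sdiff.mp hr).2),
      Finset.sum_congr rfl (fun r (hr : r ∈ T') => if_pos hr),
      Finset.sum_const, Finset.sum_const, Finset.card_sdiff_of_subset hT'sub, hT'card,
      nsmul_eq_mul, nsmul_eq_mul, mul_one]
    have hcast : ((k - b' : ℕ) : ZMod 3) + (b' : ℕ) * 2 = ((k + b' : ℕ) : ZMod 3) := by
      push_cast [Nat.cast_sub hble.1]
      ring
    rw [hcast, ZMod.natCast_eq_zero_iff]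
    exact hble.2

end AuxComb
section AuxGen

variable {m : ℕ}

lemma zmod3_l2 : ∀ x : ZMod 3, x ≠ 0 → ¬((0 : ZMod 3) = x + x) := by decide

lemma zmod3_l3 : ∀ x : ZMod 3, x ≠ 0 → ¬(x = x + x) := by decide

lemma zmod3_l5 : ∀ x y : ZMod 3, y ≠ 0 → ¬(x = x + y + y) := by decide

lemma gen_spec (hm : 2 ≤ m) (α : F4) (hα : α ^ 2 = α + 1) (j : Fin m → ZMod 3)
    (hj0 : j ≠ 0) (hj2 : hammingNorm j ≠ 2) :
    ∃ (g : (Fin m → ZMod 3) → ZMod 2) (u : F4),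
      (∀ j', hammingNorm j' = 2 → dft α g j' = 0) ∧ hammingNorm g = 6 ∧
        dft α g j * u = 1 := by
  obtain ⟨q, d, hjq, hdq, hdr, hdj⟩ := exists_qd j hj0 hj2
  haveI : Nontrivial (Fin m) := Fin.nontrivial_iff_two_le.mpr hm
  obtain ⟨r, hr⟩ := exists_ne q
  have hdr0 : d r ≠ 0 := hdr r hr
  set e : Fin m → ZMod 3 := fun s => if s = q then 1 else 0 with he
  have heq : e q = 1 := by simp [he]
  have hddq : (d + d) q = 0 := by rw [Pi.add_apply, hdq, add_zero]
  -- cross inequalities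
  have cross : ∀ x y : Fin m → ZMod 3, x q = 0 → y q = 0 → x ≠ e + y := by
    intro x y hx hy h
    have h' := congrFun h q
    rw [Pi.add_apply, hx, hy, heq] at h'
    exact (by decide : ¬((0 : ZMod 3) = 1 + 0)) h'
  have c1 : (0 : Fin m → ZMod 3) ≠ e := fun h =>
    cross 0 0 rfl rfl (by rw [add_zero]; exact h)
  have c2 : (0 : Fin m → ZMod 3) ≠ e + d := fun h => cross 0 d rfl hdq h
  have c3 : (0 : Fin m → ZMod 3) ≠ e + d + d := fun h =>
    cross 0 (d + d) rfl hddq (by rwa [← add_assoc])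
  have c4 : d ≠ e := fun h => cross d 0 hdq rfl (by rw [add_zero]; exact h)
  have c5 : d ≠ e + d := fun h => cross d d hdq hdq h
  have c6 : d ≠ e + d + d := fun h => cross d (d + d) hdq hddq (by rwa [← add_assoc])
  have c7 : d + d ≠ e := fun h => cross (d + d) 0 hddq rfl (by rw [add_zero]; exact h)
  have c8 : d + d ≠ e + d := fun h => cross (d + d) d hddq hdq h
  have c9 : d + d ≠ e + d + d := fun h =>
    cross (d + d) (d + d) hddq hddq (by rwa [← add_assoc])
  -- line inequalities
  have l1 : (0 : Fin m → ZMod 3) ≠ d := fun h => hdr0 (congrFun h r).symm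
  have l2 : (0 : Fin m → ZMod 3) ≠ d + d := by
    intro h
    have h' := congrFun h r
    simp only [Pi.add_apply, Pi.zero_apply] at h'
    exact zmod3_l2 (d r) hdr0 h'
  have l3 : d ≠ d + d := by
    intro h
    have h' := congrFun h r
    simp only [Pi.add_apply] at h'
    exact zmod3_l3 (d r) hdr0 h'
  have l4 : e ≠ e + d := by
    intro h
    have h' := congrFun h r
    simp only [Pi.add_apply] at h'
    exact hdr0 (by rwa [left_eq_add] at h')
  have l5 : e ≠ e + d + d := by
    intro h
    have h' := congrFun h r
    simp only [Pi.add_apply] at h'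
    exact zmod3_l5 (e r) (d r) hdr0 h'
  have l6 : e + d ≠ e + d + d := by
    intro h
    have h' := congrFun h r
    simp only [Pi.add_apply] at h'
    exact hdr0 (by rwa [left_eq_add] at h')
  set pts : Finset (Fin m → ZMod 3) := {0, d, d + d, e, e + d, e + d + d} with hpts
  have n0 : (0 : Fin m → ZMod 3) ∉ ({d, d + d, e, e + d, e + d + d} :
      Finset (Fin m → ZMod 3)) := by
    simp only [Finset.mem_insert, Finset.mem_singleton]
    push_neg
    exact ⟨l1, l2, c1, c2, c3⟩
  have n1 : d ∉ ({d + d, e, e + d, e + d + d} : Finset (Fin m → ZMod 3)) := by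
    simp only [Finset.mem_insert, Finset.mem_singleton]
    push_neg
    exact ⟨l3, c4, c5, c6⟩
  have n2 : d + d ∉ ({e, e + d, e + d + d} : Finset (Fin m → ZMod 3)) := by
    simp only [Finset.mem_insert, Finset.mem_singleton]
    push_neg
    exact ⟨c7, c8, c9⟩
  have n3 : e ∉ ({e + d, e + d + d} : Finset (Fin m → ZMod 3)) := by
    simp only [Finset.mem_insert, Finset.mem_singleton]
    push_neg
    exact ⟨l4, l5⟩
  have n4 : e + d ∉ ({e + d + d} : Finset (Fin m → ZMod 3)) := by
    simp only [Finset.mem_singleton]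
    exact l6
  set g : (Fin m → ZMod 3) → ZMod 2 := fun x => if x ∈ pts then 1 else 0 with hg
  have hde : ∀ j' : Fin m → ZMod 3, dotp e j' = j' q := by
    intro j'
    have : ∀ s, e s * j' s = if s = q then j' s else 0 := by
      intro s
      rw [he]
      by_cases hs : s = q <;> simp [hs]
    rw [dotp, Finset.sum_congr rfl (fun s _ => this s),
      Finset.sum_ite_eq' Finset.univ q (fun s => j' s), if_pos (Finset.mem_univ q)]
  have hdft : ∀ j', dft α g j'
      = (if dotp d j' = 0 then 1 else 0) * (1 + α ^ (j' q).val) := by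
    intro j'
    have h1 : dft α g j' = ∑ x ∈ pts, α ^ (dotp x j').val := by
      rw [dft]
      have : ∀ x, toF4 (g x) * α ^ (dotp x j').val
          = if x ∈ pts then α ^ (dotp x j').val else 0 := by
        intro x
        rw [hg]
        by_cases hx : x ∈ pts <;> simp [hx]
      rw [Finset.sum_congr rfl (fun x _ => this x), Finset.sum_ite_mem,
        Finset.univ_inter]
    rw [h1, hpts, Finset.sum_insert n0, Finset.sum_insert n1, Finset.sum_insert n2,
      Finset.sum_insert n3, Finset.sum_insert n4, Finset.sum_singleton]
    simp only [dotp_zero_left, dotp_add_left, B_add α hα, hde j', ZMod.val_zero,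
      pow_zero]
    rw [← one_add_pow α hα (dotp d j')]
    ring
  refine ⟨g, (if j q = 1 then 1 + α ^ 2 else 1 + α), ?_, ?_, ?_⟩
  · -- vanishing at weight-2 frequencies
    intro j' h2'
    rw [hdft j']
    by_cases hD : dotp d j' = 0
    · rw [if_pos hD, one_mul]
      have hjq' : j' q = 0 := by
        by_contra hne
        have hs : (Finset.univ.filter (fun s => j' s ≠ 0)).card = 2 := h2'
        obtain ⟨a, b, hab, hsab⟩ := Finset.card_eq_two.mp hs
        have hqmem : q ∈ Finset.univ.filter (fun s => j' s ≠ 0) := by simp [hne]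
        have hsum : dotp d j' = ∑ s ∈ Finset.univ.filter (fun s => j' s ≠ 0),
            d s * j' s := by
          rw [dotp]
          symm
          apply Finset.sum_subset (Finset.subset_univ _)
          intro x _ hx
          have : j' x = 0 := by
            by_contra hc
            exact hx (by simp [hc])
          rw [this, mul_zero]
        rw [hsab, Finset.sum_pair hab] at hsum
        rw [hsab] at hqmem
        simp only [Finset.mem_insert, Finset.mem_singleton] at hqmem
        have hamem : j' a ≠ 0 := by
          have : a ∈ Finset.univ.filter (fun s => j' s ≠ 0) := by
            rw [hsab]; simp
          simpa using this
        have hbmem : j' b ≠ 0 := by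
          have : b ∈ Finset.univ.filter (fun s => j' s ≠ 0) := by
            rw [hsab]; simp
          simpa using this
        rcases hqmem with h | h
        · subst h
          rw [hdq, zero_mul, zero_add] at hsum
          exact zmod3_mul_ne _ _ (hdr b (fun hc => hab hc.symm)) hbmem (hsum ▸ hD)
        · subst h
          rw [hdq, zero_mul, add_zero] at hsum
          exact zmod3_mul_ne _ _ (hdr a hab) hamem (hsum ▸ hD)
      rw [hjq', show ((0 : ZMod 3)).val = 0 from rfl, pow_zero]
      linear_combination F4_two
    · rw [if_neg hD, zero_mul]
  · -- weight 6
    have hfilter : Finset.univ.filter (fun x => g x ≠ 0) = pts := by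
      ext x
      rw [hg]
      by_cases hx : x ∈ pts <;> simp [hx]
    have : hammingNorm g = (Finset.univ.filter (fun x => g x ≠ 0)).card := rfl
    rw [this, hfilter, hpts, Finset.card_insert_of_notMem n0,
      Finset.card_insert_of_notMem n1, Finset.card_insert_of_notMem n2,
      Finset.card_insert_of_notMem n3, Finset.card_insert_of_notMem n4,
      Finset.card_singleton]
  · -- pairing to 1
    rw [hdft j, if_pos hdj, one_mul]
    rcases zmod3_cases (j q) with h | h | h
    · exact absurd h hjq
    · rw [h, if_pos rfl, show ((1 : ZMod 3)).val = 1 from rfl, pow_one]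
      exact alpha_inv hα
    · rw [h, if_neg (by decide), show ((2 : ZMod 3)).val = 2 from rfl]
      rw [mul_comm]
      exact alpha_inv hα

end AuxGen
section AuxFinal

variable {m : ℕ}

lemma hammingNorm_le (j : Fin m → ZMod 3) : hammingNorm j ≤ m :=
  le_trans hammingNorm_le_card_fintype (le_of_eq (Fintype.card_fin m))

lemma sum_eq_norm (g : (Fin m → ZMod 3) → ZMod 2) :
    ∑ i, g i = ((hammingNorm g : ℕ) : ZMod 2) := by
  have h1 : ∑ i, g i = ∑ i ∈ Finset.univ.filter (fun i => g i ≠ 0), g i := by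
    symm
    apply Finset.sum_subset (Finset.filter_subset _ _)
    intro x _ hx
    by_contra hc
    exact hx (Finset.mem_filter.mpr ⟨Finset.mem_univ x, hc⟩)
  have h2 : ∀ i ∈ Finset.univ.filter (fun i => g i ≠ 0), g i = 1 := by
    intro i hi
    have : g i ≠ 0 := (Finset.mem_filter.mp hi).2
    revert this
    generalize g i = x
    revert x
    decide
  rw [h1, Finset.sum_congr rfl h2, Finset.sum_const, nsmul_eq_mul, mul_one]
  rfl

lemma dft_zero_freq (α : F4) (g : (Fin m → ZMod 3) → ZMod 2) :
    dft α g 0 = toF4 (∑ i, g i) := by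
  rw [dft, map_sum]
  refine Finset.sum_congr rfl (fun i _ => ?_)
  rw [dotp_zero_right, ZMod.val_zero, pow_zero, mul_one]

end AuxFinal
/-- for `m ≥ 4`, the `F₂`-span of the weight-6 (minimum-weight)
codewords of `BiD^⊥(m,2,2)` is the abelian code `A(m, {0,…,m} \\ {0,2})`
(whose dual is `BiD(m,2,2) ⊕ BiD(m,0,0) = A(m,{0,2})`). -/
theorem stmt_19 (m : ℕ) (hm : 4 ≤ m) (α : F4) (hα : α ^ 2 = α + 1) :
    Submodule.span (ZMod 2)
        {f : (Fin m → ZMod 3) → ZMod 2 |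
          f ∈ code m α {n | n ≤ m ∧ n ≠ 2} ∧ hammingNorm f = 6}
      = codeSubmodule m α {n | n ≤ m ∧ n ≠ 0 ∧ n ≠ 2} := by
  classical
  have hm2 : 2 ≤ m := by omega
  apply le_antisymm
  · -- easy direction: every weight-6 codeword is in A(m, {0,…,m} \ {0,2})
    rw [Submodule.span_le]
    rintro g ⟨hg1, hg6⟩
    intro j' hj'
    have hle : hammingNorm j' ≤ m := hammingNorm_le j'
    by_cases h2 : hammingNorm j' = 2
    · exact hg1 j' (fun hW => hW.2 h2)
    · have h0 : hammingNorm j' = 0 := by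
        by_contra h0
        exact hj' ⟨hle, h0, h2⟩
      have hj0 : j' = 0 := hammingNorm_eq_zero.mp h0
      subst hj0
      rw [dft_zero_freq, sum_eq_norm, hg6, show ((6 : ℕ) : ZMod 2) = 0 by decide,
        map_zero]
  · -- hard direction
    intro f hf
    have hf' : ∀ j : Fin m → ZMod 3,
        hammingNorm j ∉ {n | n ≤ m ∧ n ≠ 0 ∧ n ≠ 2} → dft α f j = 0 := hf
    set J : Finset (Fin m → ZMod 3) :=
      Finset.univ.filter (fun j => j ≠ 0 ∧ hammingNorm j ≠ 2) with hJ
    have hgen : ∀ j : Fin m → ZMod 3, ∃ (g : (Fin m → ZMod 3) → ZMod 2) (u : F4),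
        (j ≠ 0 ∧ hammingNorm j ≠ 2) →
          ((∀ j', hammingNorm j' = 2 → dft α g j' = 0) ∧ hammingNorm g = 6 ∧
            dft α g j * u = 1) := by
      intro j
      by_cases h : j ≠ 0 ∧ hammingNorm j ≠ 2
      · obtain ⟨g, u, h1, h2, h3⟩ := gen_spec hm2 α hα j h.1 h.2
        exact ⟨g, u, fun _ => ⟨h1, h2, h3⟩⟩
      · exact ⟨0, 0, fun hc => absurd hc h⟩
    choose gg uu hgg using hgen
    set c : (Fin m → ZMod 3) → (Fin m → ZMod 3) → F4 :=
      fun j t => dft α f j * uu j * α ^ (dotp t j).val with hc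
    have hzw : ∀ j t : Fin m → ZMod 3,
        ∃ w : ZMod 2, toF4 w = α ^ 2 * c j t + α * (c j t) ^ 2 := by
      intro j t
      set z : F4 := α ^ 2 * c j t + α * (c j t) ^ 2 with hz
      have hsq : z ^ 2 = z := by
        calc z ^ 2 = α ^ 4 * (c j t) ^ 2 + α ^ 2 * (c j t) ^ 4
            + 2 * (α ^ 2 * c j t * (α * (c j t) ^ 2)) := by rw [hz]; ring
          _ = α * (c j t) ^ 2 + α ^ 2 * c j t := by
              rw [F4_pow4 α, F4_pow4 (c j t), show (2 : F4) = 0 from F4_two]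
              ring
          _ = z := by rw [hz]; ring
      have hz01 : z = 0 ∨ z = 1 := by
        have hfac : z * (z - 1) = 0 := by linear_combination hsq
        rcases mul_eq_zero.mp hfac with h | h
        · exact Or.inl h
        · exact Or.inr (sub_eq_zero.mp h)
      rcases hz01 with h | h
      · exact ⟨0, by rw [h, map_zero]⟩
      · exact ⟨1, by rw [h, map_one]⟩
    choose w hw using hzw
    set Φ : F4 →+ F4 := AddMonoidHom.mk' (fun x => α ^ 2 * x + α * x ^ 2) (by
      intro x y
      linear_combination (α * x * y) * F4_two) with hΦ
    have hΦval : ∀ v : ZMod 2, Φ (toF4 v) = toF4 v := by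
      intro v
      have : v = 0 ∨ v = 1 := by revert v; decide
      rcases this with h | h <;> subst h
      · rw [map_zero, map_zero]
      · rw [map_one]
        show α ^ 2 * 1 + α * 1 ^ 2 = 1
        rw [mul_one, one_pow, mul_one]
        linear_combination hα + α * F4_two
    have hΦmul : ∀ (cc : F4) (v : ZMod 2),
        Φ (cc * toF4 v) = (α ^ 2 * cc + α * cc ^ 2) * toF4 v := by
      intro cc v
      have : v = 0 ∨ v = 1 := by revert v; decide
      rcases this with h | h <;> subst h
      · rw [map_zero, mul_zero, map_zero, mul_zero]
      · rw [map_one, mul_one, mul_one]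
        rfl
    have main : f = ∑ j ∈ J, ∑ t : Fin m → ZMod 3,
        w j t • (fun i => gg j (i + t)) := by
      funext i
      apply toF4_injective
      have rhs1 : toF4 ((∑ j ∈ J, ∑ t : Fin m → ZMod 3,
          w j t • (fun i => gg j (i + t))) i)
          = ∑ j ∈ J, ∑ t : Fin m → ZMod 3, toF4 (w j t) * toF4 (gg j (i + t)) := by
        rw [Finset.sum_apply, map_sum]
        refine Finset.sum_congr rfl (fun j _ => ?_)
        rw [Finset.sum_apply, map_sum]
        refine Finset.sum_congr rfl (fun t _ => ?_)
        rw [Pi.smul_apply, smul_eq_mul, map_mul]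
      rw [rhs1]
      have step1 : toF4 (f i) = ∑ j ∈ J, dft α f j * α ^ (dotp (-i) j).val := by
        rw [dft_inversion α hα f i]
        symm
        apply Finset.sum_subset (Finset.subset_univ J)
        intro j _ hjJ
        have hdftf : dft α f j = 0 := by
          by_cases hj0 : j = 0
          · subst hj0
            apply hf'
            rw [hammingNorm_zero]
            intro hW
            exact hW.2.1 rfl
          · have h2 : hammingNorm j = 2 := by
              by_contra hc
              exact hjJ (by rw [hJ]; simp [hj0, hc])
            apply hf'
            intro hW
            exact hW.2.2 h2
        rw [hdftf, zero_mul]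
      have eq1 : toF4 (f i) = ∑ j ∈ J, ∑ t : Fin m → ZMod 3,
          c j t * toF4 (gg j (i + t)) := by
        rw [step1]
        refine Finset.sum_congr rfl (fun j hjJ => ?_)
        have hj : j ≠ 0 ∧ hammingNorm j ≠ 2 := by
          rw [hJ] at hjJ
          simpa using hjJ
        obtain ⟨hcode, hnorm, hunit⟩ := hgg j hj
        have ht : ∑ t : Fin m → ZMod 3, c j t * toF4 (gg j (i + t))
            = dft α f j * uu j * (α ^ (dotp (-i) j).val * dft α (gg j) j) := by
          rw [← dft_translate_sum α hα (gg j) i j, Finset.mul_sum]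
          refine Finset.sum_congr rfl (fun t _ => ?_)
          rw [hc]
          ring
        rw [ht]
        calc dft α f j * α ^ (dotp (-i) j).val
            = dft α f j * α ^ (dotp (-i) j).val * (dft α (gg j) j * uu j) := by
              rw [hunit, mul_one]
          _ = dft α f j * uu j * (α ^ (dotp (-i) j).val * dft α (gg j) j) := by
              ring
      calc toF4 (f i) = Φ (toF4 (f i)) := (hΦval _).symm
        _ = Φ (∑ j ∈ J, ∑ t : Fin m → ZMod 3, c j t * toF4 (gg j (i + t))) := by
            rw [← eq1]
        _ = ∑ j ∈ J, ∑ t : Fin m → ZMod 3, Φ (c j t * toF4 (gg j (i + t))) := by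
            rw [map_sum]
            exact Finset.sum_congr rfl (fun j _ => map_sum Φ _ _)
        _ = ∑ j ∈ J, ∑ t : Fin m → ZMod 3, toF4 (w j t) * toF4 (gg j (i + t)) := by
            refine Finset.sum_congr rfl (fun j _ => Finset.sum_congr rfl (fun t _ => ?_))
            rw [hΦmul, ← hw]
    rw [main]
    apply Submodule.sum_mem
    intro j hjJ
    apply Submodule.sum_mem
    intro t _
    apply Submodule.smul_mem
    apply Submodule.subset_span
    have hj : j ≠ 0 ∧ hammingNorm j ≠ 2 := by
      rw [hJ] at hjJ
      simpa using hjJ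
    obtain ⟨hcode, hnorm, _⟩ := hgg j hj
    refine ⟨?_, ?_⟩
    · intro j' hj'
      rw [dft_translate α hα (gg j) t j']
      have hle : hammingNorm j' ≤ m := hammingNorm_le j'
      have h2 : hammingNorm j' = 2 := by
        by_contra h2
        exact hj' ⟨hle, h2⟩
      rw [hcode j' h2, mul_zero]
    · rw [hammingNorm_translate, hnorm]
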